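/- If X ∈ Sym(3N) is positive semidefinite with rank(X) = 3, whose first diagonal 3×3 block is I₃ and whose i-th diagonal 3×3 block is α_i I₃ with α_i > 0 for i ≥ 2, then X factors as X = ŪᵀŪ where Ū = [R̄₁, …, R̄_N] is a 3×3N matrix with R̄₁ ∈ O(3) and R̄_i ∈ 𝔰O(3) for i ≥ 2. Moreover U = R̄₁ᵀŪ has first block equal to I₃ and satisfies UᵀU = X. -/

import Mathlib

/-!
Write `X = Vᵀ V`. Since the first diagonal block of `X` is `I₃`, the three columns `W` of `V`
belonging to the first block are orthonormal, and since `rank V = rank X = 3` they span the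
column space of `V`. Hence `V = W Wᵀ V`, and `X = Ūᵀ Ū` for `Ū = Wᵀ V`, which is just the first
block row of `X`. The blocks of `Ū` then satisfy `R̄ᵢᵀ R̄ᵢ = Xᵢᵢ = αᵢ I₃`, so `R̄ᵢ` is `√αᵢ` times
an orthogonal matrix.
-/

open Matrix

namespace Matrix

variable {m n r R : Type*}

theorem PosSemidef.exists_eq_transpose_mul_self [Fintype n] [DecidableEq n] {X : Matrix n n ℝ}
    (hX : X.PosSemidef) : ∃ V : Matrix n n ℝ, X = Vᵀ * V := by
  open scoped MatrixOrder Matrix.Norms.L2Operator in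
  obtain ⟨V, hV⟩ := CStarAlgebra.nonneg_iff_eq_star_mul_self.mp hX.nonneg
  exact ⟨V, by rwa [star_eq_conjTranspose, conjTranspose_eq_transpose_of_trivial] at hV⟩

theorem transpose_submatrix_mul_submatrix [Fintype m] [AddCommMonoid R] [Mul R] {o : Type*}
    (V : Matrix m n R) (e : r → n) (f : o → n) :
    (V.submatrix id e)ᵀ * V.submatrix id f = (Vᵀ * V).submatrix e f := by
  rw [submatrix_mul _ _ _ id _ Function.bijective_id, transpose_submatrix]

theorem range_mulVecLin_submatrix_le [Fintype n] [Fintype r] [CommSemiring R]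
    (V : Matrix m n R) (e : r → n) :
    LinearMap.range (V.submatrix id e).mulVecLin ≤ LinearMap.range V.mulVecLin := by
  simp only [range_mulVecLin]
  exact Submodule.span_mono (by rintro _ ⟨j, rfl⟩; exact ⟨e j, rfl⟩)

theorem rank_eq_card_of_transpose_mul_self_eq_one [Fintype m] [Fintype r] [DecidableEq r]
    {K : Type*} [Field K] [LinearOrder K] [IsStrictOrderedRing K] {W : Matrix m r K}
    (hW : Wᵀ * W = 1) : W.rank = Fintype.card r := by
  rw [← rank_transpose_mul_self, hW, rank_one]

theorem mul_transpose_mul_eq_self_of_range_le [Fintype m] [Fintype n] [Fintype r]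
    [DecidableEq r] [CommSemiring R] {W : Matrix m r R} {V : Matrix m n R} (hW : Wᵀ * W = 1)
    (hV : LinearMap.range V.mulVecLin ≤ LinearMap.range W.mulVecLin) :
    W * (Wᵀ * V) = V := by
  refine ext_iff_mulVec.mpr fun v => ?_
  obtain ⟨c, hc⟩ := hV ⟨v, rfl⟩
  simp only [mulVecLin_apply] at hc
  rw [← mulVec_mulVec, ← mulVec_mulVec, ← hc, mulVec_mulVec c, hW, one_mulVec]

theorem PosSemidef.eq_transpose_mul_self_submatrix [Fintype n] [DecidableEq n] [Fintype r]
    [DecidableEq r] {X : Matrix n n ℝ} (hX : X.PosSemidef) (e : r → n)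
    (he : X.submatrix e e = 1) (hrank : X.rank = Fintype.card r) :
    X = (X.submatrix e id)ᵀ * X.submatrix e id := by
  obtain ⟨V, rfl⟩ := hX.exists_eq_transpose_mul_self
  set W := V.submatrix id e
  have hW : Wᵀ * W = 1 := by rw [transpose_submatrix_mul_submatrix, he]
  have hrange : LinearMap.range V.mulVecLin ≤ LinearMap.range W.mulVecLin := by
    refine (Submodule.eq_of_le_of_finrank_le (range_mulVecLin_submatrix_le V e) ?_).ge
    change V.rank ≤ W.rank
    rw [rank_eq_card_of_transpose_mul_self_eq_one hW, ← hrank, rank_transpose_mul_self]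
  have hrow : (Vᵀ * V).submatrix e id = Wᵀ * V :=
    (transpose_submatrix_mul_submatrix V e id).symm
  rw [hrow, transpose_mul, transpose_transpose, Matrix.mul_assoc,
    mul_transpose_mul_eq_self_of_range_le hW hrange]

theorem exists_eq_smul_of_transpose_mul_self_eq_smul_one [Fintype m] [DecidableEq n]
    {B : Matrix m n ℝ} {α : ℝ} (hα : 0 < α) (hB : Bᵀ * B = α • 1) :
    ∃ s : ℝ, 0 < s ∧ ∃ R : Matrix m n ℝ, Rᵀ * R = 1 ∧ B = s • R := by
  have hs : 0 < √α := Real.sqrt_pos.mpr hα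
  refine ⟨√α, hs, (√α)⁻¹ • B, ?_, by rw [smul_smul, mul_inv_cancel₀ hs.ne', one_smul]⟩
  rw [transpose_smul, Matrix.smul_mul, Matrix.mul_smul, hB, smul_smul, smul_smul, ← mul_inv,
    Real.mul_self_sqrt hα.le, inv_mul_cancel₀ hα.ne', one_smul]

end Matrix

theorem rank3_psd_factorization
    (N : ℕ) [NeZero N] (X : Matrix (Fin N × Fin 3) (Fin N × Fin 3) ℝ)
    (hX : X.PosSemidef) (hrank : X.rank = 3)
    (hblk1 : ∀ k l : Fin 3, X (0, k) (0, l) = (1 : Matrix (Fin 3) (Fin 3) ℝ) k l)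
    (hblk : ∀ i : Fin N, i ≠ 0 → ∃ α : ℝ, 0 < α ∧ ∀ k l : Fin 3,
      X (i, k) (i, l) = α * (1 : Matrix (Fin 3) (Fin 3) ℝ) k l) :
    ∃ Ubar : Matrix (Fin 3) (Fin N × Fin 3) ℝ,
      X = Ubarᵀ * Ubar ∧
      -- the first block R̄₁ of Ū is in O(3)
      (Matrix.of fun j k => Ubar j ((0 : Fin N), k) : Matrix (Fin 3) (Fin 3) ℝ)ᵀ *
        (Matrix.of fun j k => Ubar j ((0 : Fin N), k)) = 1 ∧
      -- the other blocks R̄ᵢ of Ū are in 𝔰O(3)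
      (∀ i : Fin N, i ≠ 0 → ∃ s : ℝ, 0 < s ∧ ∃ R : Matrix (Fin 3) (Fin 3) ℝ,
        Rᵀ * R = 1 ∧ (Matrix.of fun j k => Ubar j (i, k)) = s • R) ∧
      -- U = R̄₁ᵀ Ū has first block I₃ and satisfies UᵀU = X
      (∀ j k : Fin 3,
        ((Matrix.of fun j k => Ubar j ((0 : Fin N), k))ᵀ * Ubar) j ((0 : Fin N), k) =
          (1 : Matrix (Fin 3) (Fin 3) ℝ) j k) ∧
      ((Matrix.of fun j k => Ubar j ((0 : Fin N), k))ᵀ * Ubar)ᵀ *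
        ((Matrix.of fun j k => Ubar j ((0 : Fin N), k))ᵀ * Ubar) = X := by
  let block (i : Fin N) : Fin 3 → Fin N × Fin 3 := fun k => (i, k)
  let Ubar := X.submatrix (block 0) id
  have hR₁ : (Matrix.of fun j k => Ubar j ((0 : Fin N), k)) = 1 := Matrix.ext hblk1
  have hfact : X = Ubarᵀ * Ubar :=
    hX.eq_transpose_mul_self_submatrix (block 0) hR₁ (by rw [hrank, Fintype.card_fin])
  have hU : (Matrix.of fun j k => Ubar j ((0 : Fin N), k))ᵀ * Ubar = Ubar := by
    rw [hR₁, transpose_one, Matrix.one_mul]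
  refine ⟨Ubar, hfact, by rw [hR₁, transpose_one, Matrix.one_mul], fun i hi => ?_,
    fun j k => by rw [hU]; exact hblk1 j k, by rw [hU, ← hfact]⟩
  obtain ⟨α, hα, hXi⟩ := hblk i hi
  refine exists_eq_smul_of_transpose_mul_self_eq_smul_one hα ?_
  change (Ubar.submatrix id (block i))ᵀ * Ubar.submatrix id (block i) = _
  rw [transpose_submatrix_mul_submatrix, ← hfact]
  ext k l
  simpa using hXi k l
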